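/- Let W be the lazy random walk on a finite simple connected regular graph G = (V,E), s ≥ t_mix + 1, and let A_1, A_2 ⊂ ℕ_0 be finite intervals with min(A_1) = 0 and min(A_2) − max(A_1) ≥ s. Then for every starting vertex ρ: P_ρ(R^W(A_1) ∩ R^W(A_2) ≠ ∅) ≤ 2·#A_1·#A_2 / #V. -/

import Mathlib

open Finset

variable {V : Type*} [Fintype V] [DecidableEq V] [Nonempty V]

/-- One-step transition kernel of the lazy random walk on `G`:
stay put with probability `1/2`, otherwise move to a uniformly chosen neighbour. -/
noncomputable def lazyStep (G : SimpleGraph V) [DecidableRel G.Adj] (x y : V) : ℝ :=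
  if x = y then 1 / 2 else if G.Adj x y then 1 / (2 * (G.degree x : ℝ)) else 0

/-- `n`-step transition probabilities of the lazy random walk. -/
noncomputable def lazyProb (G : SimpleGraph V) [DecidableRel G.Adj] : ℕ → V → V → ℝ
  | 0, x, y => if x = y then 1 else 0
  | n + 1, x, y => ∑ z : V, lazyStep G x z * lazyProb G n z y

/-- The stationary (degree-biased) distribution `π(x) = deg(x)/(2#E)`. -/
noncomputable def statDist (G : SimpleGraph V) [DecidableRel G.Adj] (x : V) : ℝ :=
  (G.degree x : ℝ) / (2 * (G.edgeFinset.card : ℝ))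

/-- The uniform `(ℓ∞, 1/4)` mixing time. -/
noncomputable def tmix (G : SimpleGraph V) [DecidableRel G.Adj] : ℕ :=
  sInf {n : ℕ | ∀ x y : V, |lazyProb G n x y / statDist G y - 1| ≤ 1 / 4}

/-- Extension of a finite path to all of `ℕ` (constant after time `N`). -/
def extPath (N : ℕ) (γ : Fin (N + 1) → V) : ℕ → V :=
  fun n => γ ⟨min n N, Nat.lt_succ_of_le (min_le_right n N)⟩

/-- Weight of a finite path under the lazy random walk kernel. -/
noncomputable def pathWeight (G : SimpleGraph V) [DecidableRel G.Adj]
    (N : ℕ) (γ : Fin (N + 1) → V) : ℝ :=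
  ∏ i ∈ Finset.range N, lazyStep G (extPath N γ i) (extPath N γ (i + 1))

open Classical in
/-- Probability, for the lazy random walk started at `ρ`, of a path event
depending only on the first `N+1` coordinates. -/
noncomputable def walkProb (G : SimpleGraph V) [DecidableRel G.Adj]
    (ρ : V) (N : ℕ) (E : (ℕ → V) → Prop) : ℝ :=
  ∑ γ : Fin (N + 1) → V,
    if extPath N γ 0 = ρ ∧ E (extPath N γ) then pathWeight G N γ else 0

open Classical in
/-- Expectation, for the lazy random walk started at `ρ`, of a path functional
depending only on the first `N+1` coordinates. -/
noncomputable def walkExp (G : SimpleGraph V) [DecidableRel G.Adj]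
    (ρ : V) (N : ℕ) (f : (ℕ → V) → ℝ) : ℝ :=
  ∑ γ : Fin (N + 1) → V,
    if extPath N γ 0 = ρ then pathWeight G N γ * f (extPath N γ) else 0

open Classical in
/-- Probability of a path event for the lazy random walk started from `π`. -/
noncomputable def walkProbStat (G : SimpleGraph V) [DecidableRel G.Adj]
    (N : ℕ) (E : (ℕ → V) → Prop) : ℝ :=
  ∑ γ : Fin (N + 1) → V,
    if E (extPath N γ) then statDist G (extPath N γ 0) * pathWeight G N γ else 0

/-- Expectation of a path functional for the lazy random walk started from `π`. -/
noncomputable def walkExpStat (G : SimpleGraph V) [DecidableRel G.Adj]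
    (N : ℕ) (f : (ℕ → V) → ℝ) : ℝ :=
  ∑ γ : Fin (N + 1) → V,
    statDist G (extPath N γ 0) * pathWeight G N γ * f (extPath N γ)

open Classical in
/-- Probability of a joint event for two independent lazy random walks,
each started from the stationary distribution. -/
noncomputable def twoWalkProbStat (G : SimpleGraph V) [DecidableRel G.Adj]
    (N : ℕ) (E : (ℕ → V) → (ℕ → V) → Prop) : ℝ :=
  ∑ γ₁ : Fin (N + 1) → V, ∑ γ₂ : Fin (N + 1) → V,
    if E (extPath N γ₁) (extPath N γ₂) then
      (statDist G (extPath N γ₁ 0) * pathWeight G N γ₁) *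
      (statDist G (extPath N γ₂ 0) * pathWeight G N γ₂) else 0

open Classical in
/-- Probability of a joint event for two independent lazy random walks,
both started at the vertex `ρ`. -/
noncomputable def twoWalkProbFrom (G : SimpleGraph V) [DecidableRel G.Adj]
    (ρ : V) (N : ℕ) (E : (ℕ → V) → (ℕ → V) → Prop) : ℝ :=
  ∑ γ₁ : Fin (N + 1) → V, ∑ γ₂ : Fin (N + 1) → V,
    if extPath N γ₁ 0 = ρ ∧ extPath N γ₂ 0 = ρ ∧ E (extPath N γ₁) (extPath N γ₂) then
      pathWeight G N γ₁ * pathWeight G N γ₂ else 0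

/-- Range of a path over a finite set of times. -/
def walkRange (w : ℕ → V) (A : Finset ℕ) : Finset V := A.image w

/-- `q̄^G(s)`: averaged intersection probability of two independent lazy walks
started at the same (uniform) vertex. -/
noncomputable def qbar (G : SimpleGraph V) [DecidableRel G.Adj] (s : ℕ) : ℝ :=
  (1 / (Fintype.card V : ℝ)) * ∑ ρ : V,
    twoWalkProbFrom G ρ s (fun w₁ w₂ =>
      (walkRange w₁ (Finset.Icc 0 s) ∩ walkRange w₂ (Finset.Icc 1 s)).Nonempty)

/-- `H^W_ρ(m) = Σ_{i=0}^m Σ_{j=0}^m P_ρ(W(i+j)=ρ)`. -/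
noncomputable def HW (G : SimpleGraph V) [DecidableRel G.Adj] (ρ : V) (m : ℕ) : ℝ :=
  ∑ i ∈ Finset.range (m + 1), ∑ j ∈ Finset.range (m + 1), lazyProb G (i + j) ρ ρ

/-!
Union bound over the pairs `(i, j) ∈ A₁ × A₂`. By the Markov property at time `i`,
`P_ρ(W i = W j) = ∑ x, P_ρ(W i = x) p_{j-i}(x, x)`, and `p_{j-i}(x, x) ≤ (5/4) π(x) = 5 / (4 #V)`
because `j - i ≥ t_mix` and `π` is uniform on a regular graph; in total `(5/4) #A₁ #A₂ / #V`.
The mixing bound holds at every `n ≥ t_mix`, not only at `t_mix`, because one more averaging step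
preserves it; and the infimum `t_mix` attains it because some `n` qualifies at all (Doeblin:
laziness and connectedness make a power of the kernel entrywise positive, so the walk contracts
geometrically towards `π`).
-/

section LazyWalk

omit [Nonempty V]

variable (G : SimpleGraph V) [DecidableRel G.Adj]

lemma lazyStep_nonneg (x y : V) : 0 ≤ lazyStep G x y := by
  unfold lazyStep
  split_ifs <;> positivity

lemma lazyStep_self (x : V) : lazyStep G x x = 1 / 2 := if_pos rfl

lemma lazyStep_pos_of_adj {x y : V} (h : G.Adj x y) : 0 < lazyStep G x y := by
  have : (0 : ℝ) < G.degree x := by exact_mod_cast h.degree_pos_left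
  rw [lazyStep, if_neg h.ne, if_pos h]
  positivity

lemma sum_lazyStep {x : V} (hx : 0 < G.degree x) : ∑ y, lazyStep G x y = 1 := by
  have hx' : (G.degree x : ℝ) ≠ 0 := by positivity
  have hsplit : ∀ y, lazyStep G x y =
      (if x = y then 1 / 2 else 0) + (if G.Adj x y then 1 / (2 * (G.degree x : ℝ)) else 0) := by
    intro y
    by_cases hxy : x = y
    · subst hxy; simp [lazyStep]
    · simp [lazyStep, hxy]
  simp only [hsplit, sum_add_distrib, sum_ite_eq, mem_univ, if_true, ← sum_filter, sum_const,
    nsmul_eq_mul]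
  rw [← SimpleGraph.neighborFinset_eq_filter, SimpleGraph.card_neighborFinset_eq_degree]
  field_simp
  ring

lemma lazyStep_comm {d : ℕ} (hreg : G.IsRegularOfDegree d) (x y : V) :
    lazyStep G x y = lazyStep G y x := by
  simp only [lazyStep, eq_comm (a := x), G.adj_comm x, hreg x, hreg y]

lemma lazyProb_nonneg (n : ℕ) (x y : V) : 0 ≤ lazyProb G n x y := by
  induction n generalizing x with
  | zero => simp only [lazyProb]; positivity
  | succ n ih => exact sum_nonneg fun z _ => mul_nonneg (lazyStep_nonneg G x z) (ih z)

lemma lazyProb_zero (x y : V) : lazyProb G 0 x y = if x = y then 1 else 0 := rfl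

lemma lazyProb_succ (n : ℕ) (x y : V) :
    lazyProb G (n + 1) x y = ∑ z, lazyStep G x z * lazyProb G n z y := rfl

lemma lazyProb_add (m n : ℕ) (x y : V) :
    lazyProb G (m + n) x y = ∑ z, lazyProb G m x z * lazyProb G n z y := by
  induction m generalizing x with
  | zero => simp [lazyProb_zero]
  | succ m ih =>
    simp_rw [Nat.add_right_comm m 1 n, lazyProb_succ, ih, mul_sum, sum_mul, mul_assoc]
    exact sum_comm

lemma lazyProb_one (x y : V) : lazyProb G 1 x y = lazyStep G x y := by
  simp [lazyProb_succ, lazyProb_zero]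

lemma lazyProb_succ_right (n : ℕ) (x y : V) :
    lazyProb G (n + 1) x y = ∑ z, lazyProb G n x z * lazyStep G z y := by
  simp_rw [lazyProb_add, lazyProb_one]

lemma sum_lazyProb (hdeg : ∀ v, 0 < G.degree v) (n : ℕ) (x : V) :
    ∑ y, lazyProb G n x y = 1 := by
  induction n with
  | zero => simp [lazyProb_zero]
  | succ n ih =>
    simp_rw [lazyProb_succ_right]
    rw [sum_comm]
    simp_rw [← mul_sum, sum_lazyStep G (hdeg _), mul_one, ih]

lemma lazyProb_comm {d : ℕ} (hreg : G.IsRegularOfDegree d) (n : ℕ) (x y : V) :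
    lazyProb G n x y = lazyProb G n y x := by
  induction n generalizing x y with
  | zero => simp [lazyProb_zero, eq_comm]
  | succ n ih =>
    rw [lazyProb_succ, lazyProb_succ_right]
    exact sum_congr rfl fun z _ => by rw [ih z y, lazyStep_comm G hreg, mul_comm]

lemma sum_lazyProb_left {d : ℕ} (hreg : G.IsRegularOfDegree d) (hdeg : ∀ v, 0 < G.degree v)
    (n : ℕ) (y : V) : ∑ x, lazyProb G n x y = 1 := by
  simp_rw [lazyProb_comm G hreg n _ y, sum_lazyProb G hdeg]

lemma lazyProb_pos_of_le {m n : ℕ} (hmn : m ≤ n) {x y : V} (h : 0 < lazyProb G m x y) :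
    0 < lazyProb G n x y := by
  induction n, hmn using Nat.le_induction with
  | base => exact h
  | succ n _ ih =>
    rw [lazyProb_succ]
    exact sum_pos' (fun z _ => mul_nonneg (lazyStep_nonneg G x z) (lazyProb_nonneg G n z y))
      ⟨x, mem_univ x, mul_pos (by rw [lazyStep_self]; norm_num) ih⟩

lemma lazyProb_length_pos {x y : V} (w : G.Walk x y) : 0 < lazyProb G w.length x y := by
  induction w with
  | nil => simp [lazyProb_zero]
  | @cons x z y hxz w ih =>
    rw [SimpleGraph.Walk.length_cons, lazyProb_succ]
    exact sum_pos' (fun u _ => mul_nonneg (lazyStep_nonneg G x u) (lazyProb_nonneg G _ u y))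
      ⟨z, mem_univ z, mul_pos (lazyStep_pos_of_adj G hxz) ih⟩

lemma exists_forall_lazyProb_pos (hconn : G.Connected) : ∃ m, ∀ x y, 0 < lazyProb G m x y := by
  refine ⟨univ.sup fun p : V × V => G.dist p.1 p.2, fun x y => ?_⟩
  obtain ⟨w, hw⟩ := hconn.exists_walk_length_eq_dist x y
  refine lazyProb_pos_of_le G ?_ (lazyProb_length_pos G w)
  exact hw ▸ le_sup (f := fun p : V × V => G.dist p.1 p.2) (mem_univ (x, y))

lemma abs_lazyProb_succ_sub_le (hdeg : ∀ v, 0 < G.degree v) {n : ℕ} {y : V} {c ε : ℝ}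
    (h : ∀ z, |lazyProb G n z y - c| ≤ ε) (x : V) : |lazyProb G (n + 1) x y - c| ≤ ε := by
  have hstep := sum_lazyStep G (hdeg x)
  have hdev : lazyProb G (n + 1) x y - c = ∑ z, lazyStep G x z * (lazyProb G n z y - c) := by
    simp_rw [lazyProb_succ, mul_sub, sum_sub_distrib, ← sum_mul, hstep, one_mul]
  calc |lazyProb G (n + 1) x y - c|
      ≤ ∑ z, lazyStep G x z * |lazyProb G n z y - c| := by
        rw [hdev]
        refine (abs_sum_le_sum_abs _ _).trans_eq (sum_congr rfl fun z _ => ?_)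
        rw [abs_mul, abs_of_nonneg (lazyStep_nonneg G x z)]
    _ ≤ ∑ z, lazyStep G x z * ε := by gcongr with z; exact lazyStep_nonneg G x z; exact h z
    _ = ε := by rw [← sum_mul, hstep, one_mul]

/-- Doeblin's contraction. Subtracting `δ` from every entry of the `m`-step kernel costs nothing
because `∑ z, p_n(z, y) = 1 = #V · #V⁻¹` (the kernel is symmetric). -/
lemma abs_lazyProb_add_sub_inv_card_le {d : ℕ} (hreg : G.IsRegularOfDegree d)
    (hdeg : ∀ v, 0 < G.degree v) {m : ℕ} {δ : ℝ} (hδ : ∀ x z, δ ≤ lazyProb G m x z)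
    {n : ℕ} {y : V} {ε : ℝ} (h : ∀ z, |lazyProb G n z y - (Fintype.card V : ℝ)⁻¹| ≤ ε)
    (x : V) :
    |lazyProb G (m + n) x y - (Fintype.card V : ℝ)⁻¹| ≤ (1 - Fintype.card V * δ) * ε := by
  set c := (Fintype.card V : ℝ)⁻¹
  have hV : (Fintype.card V : ℝ) ≠ 0 := by have : Nonempty V := ⟨x⟩; positivity
  have hdev : lazyProb G (m + n) x y - c =
      ∑ z, (lazyProb G m x z - δ) * (lazyProb G n z y - c) := by
    simp_rw [lazyProb_add, sub_mul, mul_sub, sum_sub_distrib, ← sum_mul, ← mul_sum,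
      sum_lazyProb G hdeg, sum_lazyProb_left G hreg hdeg, sum_const, card_univ, nsmul_eq_mul]
    linear_combination (-δ) * inv_mul_cancel₀ hV
  calc |lazyProb G (m + n) x y - c|
      ≤ ∑ z, (lazyProb G m x z - δ) * |lazyProb G n z y - c| := by
        rw [hdev]
        refine (abs_sum_le_sum_abs _ _).trans_eq (sum_congr rfl fun z _ => ?_)
        rw [abs_mul, abs_of_nonneg (sub_nonneg.mpr (hδ x z))]
    _ ≤ ∑ z, (lazyProb G m x z - δ) * ε := by
        gcongr with z
        · exact sub_nonneg.mpr (hδ x z)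
        · exact h z
    _ = (1 - Fintype.card V * δ) * ε := by
        rw [← sum_mul, sum_sub_distrib, sum_lazyProb G hdeg, sum_const, card_univ, nsmul_eq_mul]

lemma exists_forall_abs_lazyProb_sub_inv_card_le [Nonempty V] (hconn : G.Connected) {d : ℕ}
    (hreg : G.IsRegularOfDegree d) (hdeg : ∀ v, 0 < G.degree v) {ε : ℝ} (hε : 0 < ε) :
    ∃ n, ∀ x y, |lazyProb G n x y - (Fintype.card V : ℝ)⁻¹| ≤ ε := by
  set c := (Fintype.card V : ℝ)⁻¹
  obtain ⟨m, hm⟩ := exists_forall_lazyProb_pos G hconn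
  obtain ⟨⟨x₀, y₀⟩, -, hmin⟩ :=
    univ.exists_min_image (fun p : V × V => lazyProb G m p.1 p.2) univ_nonempty
  set δ := lazyProb G m x₀ y₀
  have hδ : ∀ x z, δ ≤ lazyProb G m x z := fun x z => hmin (x, z) (mem_univ _)
  have hθ : Fintype.card V * δ ≤ 1 := by
    calc Fintype.card V * δ = ∑ _z : V, δ := by simp
      _ ≤ ∑ z, lazyProb G m x₀ z := sum_le_sum fun z _ => hδ x₀ z
      _ = 1 := sum_lazyProb G hdeg m x₀
  have hθ' : 1 - Fintype.card V * δ < 1 := by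
    have : (0 : ℝ) < Fintype.card V := by positivity
    nlinarith [hm x₀ y₀]
  have hpow : ∀ k x y, |lazyProb G (m * k) x y - c| ≤ (1 - Fintype.card V * δ) ^ k := by
    intro k
    induction k with
    | zero =>
      intro x y
      have hc : 0 < c := by positivity
      have hc1 : c ≤ 1 := inv_le_one_of_one_le₀ (by exact_mod_cast Fintype.card_pos)
      rw [mul_zero, pow_zero, lazyProb_zero, abs_le]
      split_ifs <;> constructor <;> linarith
    | succ k ih =>
      intro x y
      rw [Nat.mul_succ, add_comm, pow_succ']
      exact abs_lazyProb_add_sub_inv_card_le G hreg hdeg hδ (ih · y) x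
  obtain ⟨k, hk⟩ := exists_pow_lt_of_lt_one hε hθ'
  exact ⟨m * k, fun x y => (hpow k x y).trans hk.le⟩

omit [DecidableEq V] in
lemma statDist_eq_inv_card {d : ℕ} (hreg : G.IsRegularOfDegree d) (hd : 0 < d) (y : V) :
    statDist G y = (Fintype.card V : ℝ)⁻¹ := by
  have hedges : 2 * #G.edgeFinset = Fintype.card V * d := by
    rw [← G.sum_degrees_eq_twice_card_edges, sum_congr rfl fun v _ => hreg v, sum_const,
      card_univ, smul_eq_mul]
  have hV : (Fintype.card V : ℝ) ≠ 0 := by have : Nonempty V := ⟨y⟩; positivity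
  rw [statDist, hreg y]
  rw [← Nat.cast_ofNat, ← Nat.cast_mul, hedges, Nat.cast_mul]
  field_simp

omit [DecidableEq V] in
lemma abs_div_statDist_sub_one_le_iff {d : ℕ} (hreg : G.IsRegularOfDegree d) (hd : 0 < d)
    (p : ℝ) (y : V) :
    |p / statDist G y - 1| ≤ 1 / 4 ↔
      |p - (Fintype.card V : ℝ)⁻¹| ≤ (Fintype.card V : ℝ)⁻¹ / 4 := by
  have hc : 0 < (Fintype.card V : ℝ)⁻¹ := by have : Nonempty V := ⟨y⟩; positivity
  rw [statDist_eq_inv_card G hreg hd, div_sub_one hc.ne', abs_div, abs_of_pos hc, div_le_iff₀ hc]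
  constructor <;> intro <;> linarith

lemma abs_lazyProb_sub_inv_card_le_of_tmix_le [Nontrivial V] (hconn : G.Connected) {d : ℕ}
    (hreg : G.IsRegularOfDegree d) {n : ℕ} (hn : tmix G ≤ n) (x y : V) :
    |lazyProb G n x y - (Fintype.card V : ℝ)⁻¹| ≤ (Fintype.card V : ℝ)⁻¹ / 4 := by
  have hdeg : ∀ v, 0 < G.degree v := fun v => hconn.preconnected.degree_pos_of_nontrivial v
  have hd : 0 < d := hreg x ▸ hdeg x
  have hiff : ∀ k, (∀ x y, |lazyProb G k x y / statDist G y - 1| ≤ 1 / 4) ↔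
      ∀ x y, |lazyProb G k x y - (Fintype.card V : ℝ)⁻¹| ≤ (Fintype.card V : ℝ)⁻¹ / 4 := by
    simp_rw [abs_div_statDist_sub_one_le_iff G hreg hd, implies_true]
  obtain ⟨n₀, hn₀⟩ := exists_forall_abs_lazyProb_sub_inv_card_le G hconn hreg hdeg
    (ε := (Fintype.card V : ℝ)⁻¹ / 4) (by positivity)
  have htmix := (hiff _).mp <| Nat.sInf_mem
    (s := {k | ∀ x y, |lazyProb G k x y / statDist G y - 1| ≤ 1 / 4}) ⟨n₀, (hiff n₀).mpr hn₀⟩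
  induction n, hn using Nat.le_induction generalizing x with
  | base => exact htmix x y
  | succ k _ ih => exact abs_lazyProb_succ_sub_le G hdeg ih x

lemma lazyProb_le_of_tmix_le [Nontrivial V] (hconn : G.Connected) {d : ℕ}
    (hreg : G.IsRegularOfDegree d) {n : ℕ} (hn : tmix G ≤ n) (x y : V) :
    lazyProb G n x y ≤ 5 / 4 / Fintype.card V := by
  have := (abs_le.mp (abs_lazyProb_sub_inv_card_le_of_tmix_le G hconn hreg hn x y)).2
  rw [div_eq_mul_inv (5 / 4)]
  linarith

omit [DecidableEq V] in
lemma sum_pi_fin_succ_eq_sum_snoc {N : ℕ} (f : (Fin (N + 2) → V) → ℝ) :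
    ∑ γ, f γ = ∑ γ : Fin (N + 1) → V, ∑ x, f (Fin.snoc γ x) := by
  rw [← (Fin.snocEquiv fun _ => V).sum_comp, Fintype.sum_prod_type, sum_comm]
  rfl

omit [Fintype V] [DecidableEq V] in
lemma extPath_snoc_of_le {N k : ℕ} (hk : k ≤ N) (γ : Fin (N + 1) → V) (x : V) :
    extPath (N + 1) (Fin.snoc γ x) k = extPath N γ k := by
  simp only [extPath, min_eq_left hk, min_eq_left (hk.trans N.le_succ)]
  exact Fin.snoc_castSucc (α := fun _ => V) (i := ⟨k, Nat.lt_succ_of_le hk⟩) ..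

omit [Fintype V] [DecidableEq V] in
lemma extPath_snoc_self (N : ℕ) (γ : Fin (N + 1) → V) (x : V) :
    extPath (N + 1) (Fin.snoc γ x) (N + 1) = x := by
  simp only [extPath, min_self]
  exact Fin.snoc_last (α := fun _ => V) ..

lemma pathWeight_snoc (N : ℕ) (γ : Fin (N + 1) → V) (x : V) :
    pathWeight G (N + 1) (Fin.snoc γ x) = pathWeight G N γ * lazyStep G (extPath N γ N) x := by
  rw [pathWeight, prod_range_succ, extPath_snoc_of_le le_rfl, extPath_snoc_self, pathWeight]
  congr 1
  refine prod_congr rfl fun i hi => ?_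
  have hi : i < N := mem_range.mp hi
  rw [extPath_snoc_of_le hi.le, extPath_snoc_of_le hi]

lemma pathWeight_nonneg (N : ℕ) (γ : Fin (N + 1) → V) : 0 ≤ pathWeight G N γ :=
  prod_nonneg fun _ _ => lazyStep_nonneg G _ _

omit [Fintype V] [DecidableEq V] in
lemma extPath_zero (γ : Fin 1 → V) : extPath 0 γ = fun _ => γ 0 :=
  funext fun _ => congrArg γ (Subsingleton.elim _ _)

lemma walkExp_zero (ρ : V) (f : (ℕ → V) → ℝ) : walkExp G ρ 0 f = f fun _ => ρ := by
  rw [walkExp, ← (Equiv.funUnique (Fin 1) V).symm.sum_comp]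
  simp only [extPath_zero, pathWeight, range_zero, prod_empty, one_mul,
    Equiv.funUnique_symm_apply, uniqueElim_const, sum_ite_eq', mem_univ, if_true]

lemma walkExp_succ (ρ : V) (N : ℕ) (Φ : (ℕ → V) → V → ℝ)
    (hΦ : ∀ z, DependsOn (Φ · z) (Set.Iic N)) :
    walkExp G ρ (N + 1) (fun w => Φ w (w (N + 1))) =
      walkExp G ρ N (fun w => ∑ x, lazyStep G (w N) x * Φ w x) := by
  rw [walkExp, walkExp, sum_pi_fin_succ_eq_sum_snoc]
  refine sum_congr rfl fun γ _ => ?_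
  have hagree : ∀ x, ∀ k ∈ Set.Iic N, extPath (N + 1) (Fin.snoc γ x) k = extPath N γ k :=
    fun x k hk => extPath_snoc_of_le hk γ x
  simp_rw [extPath_snoc_of_le (Nat.zero_le N), extPath_snoc_self, pathWeight_snoc,
    fun x => hΦ x (hagree x)]
  split_ifs
  · simp_rw [mul_sum, mul_assoc]
  · simp

lemma walkExp_add (ρ : V) (N M : ℕ) (Φ : (ℕ → V) → V → ℝ)
    (hΦ : ∀ z, DependsOn (Φ · z) (Set.Iic N)) :
    walkExp G ρ (N + M) (fun w => Φ w (w (N + M))) =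
      walkExp G ρ N (fun w => ∑ z, lazyProb G M (w N) z * Φ w z) := by
  induction M generalizing Φ with
  | zero => simp [lazyProb_zero]
  | succ M ih =>
    rw [← add_assoc, walkExp_succ G ρ (N + M) Φ
      fun z => (hΦ z).mono (Set.Iic_subset_Iic.mpr (N.le_add_right M))]
    refine (ih (fun w v => ∑ x, lazyStep G v x * Φ w x) fun v w w' h => ?_).trans ?_
    · exact sum_congr rfl fun x _ => congrArg _ (hΦ x h)
    · simp_rw [lazyProb_succ_right, sum_mul, mul_sum, mul_assoc]
      exact congrArg _ (funext fun w => sum_comm)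

lemma walkExp_eq_of_le (hdeg : ∀ v, 0 < G.degree v) (ρ : V) {N M : ℕ} (hNM : N ≤ M)
    {f : (ℕ → V) → ℝ} (hf : DependsOn f (Set.Iic N)) : walkExp G ρ M f = walkExp G ρ N f := by
  obtain ⟨k, rfl⟩ := Nat.exists_eq_add_of_le hNM
  simp_rw [walkExp_add G ρ N k (fun w _ => f w) fun _ => hf, ← sum_mul, sum_lazyProb G hdeg,
    one_mul]

lemma walkExp_comp_apply (ρ : V) (N : ℕ) (g : V → ℝ) :
    walkExp G ρ N (fun w => g (w N)) = ∑ x, lazyProb G N ρ x * g x := by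
  have h := walkExp_add G ρ 0 N (fun _ => g) fun _ _ _ _ => rfl
  rw [zero_add] at h
  rw [h, walkExp_zero]

lemma walkProb_eq_walkExp (ρ : V) (N : ℕ) (E : (ℕ → V) → Prop) [DecidablePred E] :
    walkProb G ρ N E = walkExp G ρ N (fun w => if E w then 1 else 0) := by
  refine sum_congr rfl fun γ _ => ?_
  split_ifs <;> simp_all

lemma walkProb_le_sum {ι : Type*} (ρ : V) (N : ℕ) {E : (ℕ → V) → Prop} (S : Finset ι)
    (F : ι → (ℕ → V) → Prop) (hEF : ∀ w, E w → ∃ i ∈ S, F i w) :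
    walkProb G ρ N E ≤ ∑ i ∈ S, walkProb G ρ N (F i) := by
  classical
  simp only [walkProb]
  rw [sum_comm]
  refine sum_le_sum fun γ _ => ?_
  split_ifs with h
  · obtain ⟨i, hi, hFi⟩ := hEF _ h.2
    refine le_trans ?_ (single_le_sum (fun j _ => ?_) hi)
    · rw [if_pos ⟨h.1, hFi⟩]
    · split_ifs <;> simp [pathWeight_nonneg]
  · exact sum_nonneg fun j _ => by split_ifs <;> simp [pathWeight_nonneg]

lemma walkProb_apply_eq_apply (hdeg : ∀ v, 0 < G.degree v) (ρ : V) {N i j : ℕ} (hij : i ≤ j)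
    (hjN : j ≤ N) :
    walkProb G ρ N (fun w => w i = w j) = ∑ x, lazyProb G i ρ x * lazyProb G (j - i) x x := by
  classical
  obtain ⟨t, rfl⟩ := Nat.exists_eq_add_of_le hij
  have hdep : ∀ z, DependsOn (fun w : ℕ → V => if w i = z then (1 : ℝ) else 0) (Set.Iic i) :=
    fun z w w' h => by dsimp only; rw [h i Set.self_mem_Iic]
  rw [walkProb_eq_walkExp, walkExp_eq_of_le G hdeg ρ hjN]
  · refine (walkExp_add G ρ i t _ hdep).trans ?_
    simp only [mul_ite, mul_one, mul_zero, sum_ite_eq, mem_univ, if_true, Nat.add_sub_cancel_left]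
    exact walkExp_comp_apply G ρ i fun x => lazyProb G t x x
  · intro w w' h
    simp only [h i (by simp), h (i + t) Set.self_mem_Iic]

lemma walkProb_apply_eq_apply_le [Nontrivial V] (hconn : G.Connected) {d : ℕ}
    (hreg : G.IsRegularOfDegree d) (ρ : V) {N i j : ℕ} (hij : i + tmix G ≤ j) (hjN : j ≤ N) :
    walkProb G ρ N (fun w => w i = w j) ≤ 5 / 4 / Fintype.card V := by
  have hdeg : ∀ v, 0 < G.degree v := fun v => hconn.preconnected.degree_pos_of_nontrivial v
  rw [walkProb_apply_eq_apply G hdeg ρ (by omega) hjN]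
  calc ∑ x, lazyProb G i ρ x * lazyProb G (j - i) x x
      ≤ ∑ x, lazyProb G i ρ x * (5 / 4 / Fintype.card V) := by
        gcongr with x
        · exact lazyProb_nonneg G i ρ x
        · exact lazyProb_le_of_tmix_le G hconn hreg (by omega) x x
    _ = 5 / 4 / Fintype.card V := by rw [← sum_mul, sum_lazyProb G hdeg, one_mul]

end LazyWalk

theorem range_self_intersection_starting_at_zero_general
    (G : SimpleGraph V) [DecidableRel G.Adj] (hconn : G.Connected)
    (hcard : 2 ≤ Fintype.card V) (d : ℕ) (hreg : G.IsRegularOfDegree d)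
    (s : ℕ) (hs : tmix G + 1 ≤ s)
    (b₁ a₂ b₂ : ℕ) (hsep : b₁ + s ≤ a₂) (ρ : V) :
    walkProb G ρ b₂ (fun w =>
        (walkRange w (Finset.Icc 0 b₁) ∩ walkRange w (Finset.Icc a₂ b₂)).Nonempty) ≤
      2 * ((Finset.Icc 0 b₁).card : ℝ) * ((Finset.Icc a₂ b₂).card : ℝ) /
        (Fintype.card V : ℝ) := by
  have : Nontrivial V := Fintype.one_lt_card_iff_nontrivial.mp hcard
  have hunion : ∀ w : ℕ → V, (walkRange w (Icc 0 b₁) ∩ walkRange w (Icc a₂ b₂)).Nonempty →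
      ∃ p ∈ Icc 0 b₁ ×ˢ Icc a₂ b₂, w p.1 = w p.2 := by
    rintro w ⟨v, hv⟩
    simp only [walkRange, mem_inter, mem_image] at hv
    obtain ⟨⟨i, hi, rfl⟩, j, hj, hji⟩ := hv
    exact ⟨(i, j), mem_product.mpr ⟨hi, hj⟩, hji.symm⟩
  calc _ ≤ ∑ p ∈ Icc 0 b₁ ×ˢ Icc a₂ b₂, walkProb G ρ b₂ (fun w => w p.1 = w p.2) :=
        walkProb_le_sum G ρ b₂ _ _ hunion
    _ ≤ ∑ _p ∈ Icc 0 b₁ ×ˢ Icc a₂ b₂, 5 / 4 / (Fintype.card V : ℝ) := by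
        refine sum_le_sum fun p hp => ?_
        simp only [mem_product, mem_Icc] at hp
        exact walkProb_apply_eq_apply_le G hconn hreg ρ (by omega) hp.2.2
    _ = 5 / 4 * #(Icc 0 b₁) * #(Icc a₂ b₂) / Fintype.card V := by
        rw [sum_const, card_product, nsmul_eq_mul, Nat.cast_mul]
        ring
    _ ≤ _ := by gcongr; norm_num

/-- Range self-intersection probability when the first interval starts at 0. -/
theorem range_self_intersection_starting_at_zero
    (G : SimpleGraph V) [DecidableRel G.Adj] (hconn : G.Connected)
    (hcard : 2 ≤ Fintype.card V) (d : ℕ) (hreg : G.IsRegularOfDegree d)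
    (s : ℕ) (hs : tmix G + 1 ≤ s)
    (b₁ a₂ b₂ : ℕ) (h₂ : a₂ ≤ b₂) (hsep : b₁ + s ≤ a₂) (ρ : V) :
    walkProb G ρ b₂ (fun w =>
        (walkRange w (Finset.Icc 0 b₁) ∩ walkRange w (Finset.Icc a₂ b₂)).Nonempty) ≤
      2 * ((Finset.Icc 0 b₁).card : ℝ) * ((Finset.Icc a₂ b₂).card : ℝ) /
        (Fintype.card V : ℝ) :=
  range_self_intersection_starting_at_zero_general G hconn hcard d hreg s hs b₁ a₂ b₂ hsep ρ
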